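/- arXiv:1901.10560 — 5 statements merged into one kernel-verified Lean document; each statement's English description precedes it below -/
import Mathlib

section
/- Let n, p be positive integers, A a real n×n matrix, B₁, B₂ real n×p matrices, and 0 < h < T reals. Set B = B₁ + exp(−h·A)·B₂ and G_T = ∫_0^{T−h} exp((T−t)A)·B·Bᵀ·exp((T−t)Aᵀ) dt + ∫_{T−h}^{T} exp((T−t)A)·B₁·B₁ᵀ·exp((T−t)Aᵀ) dt. Then G_T is positive definite if and only if the columns of the matrices A^i B₁ and A^i B₂ for 0 ≤ i ≤ n−1 span ℝⁿ (equivalently, the n × 2np block matrix [B₁, B₂, AB₁, AB₂, …, A^{n−1}B₁, A^{n−1}B₂] has rank n). -/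
/-!
For `x : ℝⁿ`, `xᵀ G x = ∫₀^{T-h} |xᵀ e^{(T-t)A} B|² dt + ∫_{T-h}^T |xᵀ e^{(T-t)A} B₁|² dt`, so
`xᵀ G x = 0` exactly when `s ↦ xᵀ e^{sA} B` vanishes on `[h, T]` and `s ↦ xᵀ e^{sA} B₁` on `[0, h]`.
Vanishing of `s ↦ xᵀ e^{sA} C` on an open interval forces all its derivatives `xᵀ e^{sA} Aⁱ C` to
vanish there, and since `ℝ[A]` is a closed subalgebra containing every `e^{sA}`, this is equivalent
to `xᵀ Y C = 0` for all `Y ∈ ℝ[A]`, hence (Cayley–Hamilton) to `xᵀ Aⁱ C = 0` for `i < n`. As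
`e^{-hA}` is a unit of `ℝ[A]`, the conditions for `B = B₁ + e^{-hA} B₂` and `B₁` together amount to
those for `B₁` and `B₂`: `x` is orthogonal to every column of every `Aⁱ B₁` and `Aⁱ B₂`.
-/

open Matrix MeasureTheory intervalIntegral

attribute [local instance] Matrix.linftyOpNormedAddCommGroup Matrix.linftyOpNormedSpace
attribute [local instance] Matrix.linftyOpNormedRing Matrix.linftyOpNormedAlgebra

open NormedSpace Polynomial

namespace Matrix

variable {R m k : Type*} [Fintype m]

theorem span_eq_top_iff_forall_dotProduct_eq_zero [DecidableEq m] {K : Type*} [Field K]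
    (S : Set (m → K)) :
    Submodule.span K S = ⊤ ↔ ∀ x : m → K, (∀ v ∈ S, x ⬝ᵥ v = 0) → x = 0 := by
  constructor
  · intro hS x hx
    have hker : LinearMap.ker (dotProductEquiv K m x) = ⊤ :=
      top_le_iff.mp (hS ▸ Submodule.span_le.mpr fun v hv => by simpa using hx v hv)
    rw [LinearMap.ker_eq_top, ← map_zero (dotProductEquiv K m)] at hker
    exact (dotProductEquiv K m).injective hker
  · intro h
    by_contra hS
    obtain ⟨f, hf, hle⟩ := (Submodule.span K S).exists_le_ker_of_lt_top (lt_top_iff_ne_top.2 hS)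
    obtain ⟨x, rfl⟩ := (dotProductEquiv K m).surjective f
    have hx := h x fun v hv => by simpa using hle (Submodule.subset_span hv)
    exact hf (by rw [hx, map_zero])

theorem mem_span_pow_of_mem_adjoin [DecidableEq m] [CommRing R] [Nontrivial R]
    {A Y : Matrix m m R} (hY : Y ∈ Algebra.adjoin R {A}) :
    Y ∈ Submodule.span R ((A ^ ·) '' Set.Iio (Fintype.card m)) := by
  classical
  rw [Algebra.adjoin_singleton_eq_range_aeval] at hY
  obtain ⟨q, rfl⟩ := hY
  have hdeg : q %ₘ A.charpoly ∈ degreeLT R (Fintype.card m) :=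
    mem_degreeLT.2 (A.charpoly_degree_eq_dim ▸ degree_modByMonic_lt _ A.charpoly_monic)
  rw [degreeLT_eq_span_X_pow] at hdeg
  have hmem := Submodule.mem_map_of_mem (f := (aeval A).toLinearMap) hdeg
  rw [Submodule.map_span, Finset.coe_image, Set.image_image, Finset.coe_range] at hmem
  simpa [← aeval_eq_aeval_mod_charpoly] using hmem

/-- `x` is orthogonal to the reachable subspace of `(A, C)`, spanned by the columns of all `Y * C`
with `Y ∈ R[A]`. -/
def AnnihilatesKrylov [DecidableEq m] [CommSemiring R] (A : Matrix m m R) (C : Matrix m k R)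
    (x : m → R) : Prop :=
  ∀ Y ∈ Algebra.adjoin R {A}, x ᵥ* (Y * C) = 0

section CommRing

variable [DecidableEq m] [CommRing R] {A : Matrix m m R} {C D : Matrix m k R} {x : m → R}

theorem annihilatesKrylov_iff_forall_pow_lt [Nontrivial R] :
    AnnihilatesKrylov A C x ↔ ∀ i < Fintype.card m, x ᵥ* (A ^ i * C) = 0 := by
  refine ⟨fun h i _ => h _ (pow_mem (Algebra.self_mem_adjoin_singleton R A) i), fun h Y hY => ?_⟩
  have hle : Submodule.span R ((A ^ ·) '' Set.Iio (Fintype.card m)) ≤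
      LinearMap.ker (vecMulBilin R R x ∘ₗ mulRightLinearMap m R C) :=
    Submodule.span_le.mpr (by rintro _ ⟨i, hi, rfl⟩; exact h i hi)
  exact hle (mem_span_pow_of_mem_adjoin hY)

theorem AnnihilatesKrylov.mul_left (h : AnnihilatesKrylov A C x) {Z : Matrix m m R}
    (hZ : Z ∈ Algebra.adjoin R {A}) : AnnihilatesKrylov A (Z * C) x := fun Y hY => by
  rw [← Matrix.mul_assoc]
  exact h _ (mul_mem hY hZ)

theorem AnnihilatesKrylov.add_right_iff (h : AnnihilatesKrylov A C x) :
    AnnihilatesKrylov A (C + D) x ↔ AnnihilatesKrylov A D x :=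
  forall₂_congr fun Y hY => by rw [Matrix.mul_add, vecMul_add, h Y hY, zero_add]

end CommRing

section Exp

variable [DecidableEq m] {A : Matrix m m ℝ} {C : Matrix m k ℝ} {x : m → ℝ}

theorem exp_smul_mem_adjoin (A : Matrix m m ℝ) (s : ℝ) : exp (s • A) ∈ Algebra.adjoin ℝ {A} :=
  exp_mem (R := ℝ) (s := Algebra.adjoin ℝ {A})
    (Subalgebra.toSubmodule (Algebra.adjoin ℝ {A})).closed_of_finiteDimensional
    (Subalgebra.smul_mem _ (Algebra.self_mem_adjoin_singleton ℝ A) s)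

theorem exp_smul_mul_exp_smul (A : Matrix m m ℝ) (s t : ℝ) :
    exp (s • A) * exp (t • A) = exp ((s + t) • A) := by
  rw [← exp_add_of_commute _ _ (((Commute.refl A).smul_left s).smul_right t), add_smul]

theorem AnnihilatesKrylov.vecMul_exp_smul_mul (h : AnnihilatesKrylov A C x) (s : ℝ) :
    x ᵥ* (exp (s • A) * C) = 0 :=
  h _ (exp_smul_mem_adjoin A s)

theorem annihilatesKrylov_exp_smul_mul_iff (s : ℝ) :
    AnnihilatesKrylov A (exp (s • A) * C) x ↔ AnnihilatesKrylov A C x := by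
  refine ⟨fun h => ?_, fun h => h.mul_left (exp_smul_mem_adjoin A s)⟩
  have := h.mul_left (exp_smul_mem_adjoin A (-s))
  rwa [← Matrix.mul_assoc, exp_smul_mul_exp_smul, neg_add_cancel, zero_smul, exp_zero,
    Matrix.one_mul] at this

variable [Fintype k]

theorem vecMul_exp_smul_mul_pow_mul_eq_zero {U : Set ℝ} (hU : IsOpen U)
    (h : ∀ s ∈ U, x ᵥ* (exp (s • A) * C) = 0) (i : ℕ) :
    ∀ s ∈ U, x ᵥ* (exp (s • A) * (A ^ i * C)) = 0 := by
  induction i with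
  | zero => simpa using h
  | succ i ih =>
    intro s hs
    let L : Matrix m m ℝ →L[ℝ] (k → ℝ) :=
      LinearMap.toContinuousLinearMap (vecMulBilin ℝ ℝ x ∘ₗ mulRightLinearMap m ℝ (A ^ i * C))
    have hderiv : HasDerivAt (fun u => L (exp (u • A))) (L (exp (s • A) * A)) s :=
      L.hasFDerivAt.comp_hasDerivAt s (hasDerivAt_exp_smul_const A s)
    have hzero : (fun u => L (exp (u • A))) =ᶠ[nhds s] fun _ => 0 :=
      Filter.eventually_of_mem (hU.mem_nhds hs) ih
    have := hderiv.unique ((hasDerivAt_const s (0 : k → ℝ)).congr_of_eventuallyEq hzero)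
    simpa [L, pow_succ', Matrix.mul_assoc] using this

theorem annihilatesKrylov_of_forall_mem_open {U : Set ℝ} (hU : IsOpen U) (hne : U.Nonempty)
    (h : ∀ s ∈ U, x ᵥ* (exp (s • A) * C) = 0) : AnnihilatesKrylov A C x := by
  obtain ⟨s₀, hs₀⟩ := hne
  have hy : AnnihilatesKrylov A C (x ᵥ* exp (s₀ • A)) :=
    annihilatesKrylov_iff_forall_pow_lt.2 fun i _ => by
      rw [vecMul_vecMul]
      exact vecMul_exp_smul_mul_pow_mul_eq_zero hU h i s₀ hs₀
  intro Y hY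
  have := hy _ (mul_mem (exp_smul_mem_adjoin A (-s₀)) hY)
  rwa [vecMul_vecMul, ← Matrix.mul_assoc, ← Matrix.mul_assoc, exp_smul_mul_exp_smul,
    add_neg_cancel, zero_smul, exp_zero, Matrix.one_mul] at this

end Exp

section Integral

variable [Fintype k] {a b : ℝ}

theorem dotProduct_mul_transpose_mulVec (M : Matrix m k ℝ) (x : m → ℝ) :
    x ⬝ᵥ ((M * Mᵀ) *ᵥ x) = (x ᵥ* M) ⬝ᵥ (x ᵥ* M) := by
  rw [← mulVec_mulVec, dotProduct_mulVec, ← vecMul_transpose, transpose_transpose]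

theorem transpose_intervalIntegral {f : ℝ → Matrix m k ℝ} (hf : Continuous f) :
    (∫ t in a..b, f t)ᵀ = ∫ t in a..b, (f t)ᵀ :=
  ((LinearMap.toContinuousLinearMap (transposeLinearEquiv m k ℝ ℝ).toLinearMap
    ).intervalIntegral_comp_comm (hf.intervalIntegrable a b)).symm

theorem dotProduct_intervalIntegral_mulVec {f : ℝ → Matrix m m ℝ}
    (hf : Continuous f) (x : m → ℝ) :
    x ⬝ᵥ ((∫ t in a..b, f t) *ᵥ x) = ∫ t in a..b, x ⬝ᵥ (f t *ᵥ x) :=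
  ((LinearMap.toContinuousLinearMap
    (dotProductBilin ℝ ℝ x ∘ₗ (mulVecBilin ℝ ℝ).flip x)).intervalIntegral_comp_comm
    (hf.intervalIntegrable a b)).symm

theorem intervalIntegral_dotProduct_self_eq_zero_iff {v : ℝ → k → ℝ} (hv : Continuous v)
    (hab : a < b) : ∫ t in a..b, v t ⬝ᵥ v t = 0 ↔ ∀ t ∈ Set.Icc a b, v t = 0 := by
  refine ⟨fun h t ht => ?_, fun h => ?_⟩
  · by_contra hvt
    refine (intervalIntegral.integral_pos hab (by fun_prop) (fun u _ => ?_) ⟨t, ht, ?_⟩).ne' h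
    · simpa using dotProduct_star_self_nonneg (v u)
    · exact lt_of_le_of_ne (by simpa using dotProduct_star_self_nonneg (v t))
        (Ne.symm (mt dotProduct_self_eq_zero.mp hvt))
  · rw [intervalIntegral.integral_congr (g := fun _ => 0) fun t ht => ?_,
      intervalIntegral.integral_zero]
    simp [h t (Set.uIcc_of_le hab.le ▸ ht)]

end Integral

section Gramian

variable [DecidableEq m] [Fintype k] (A : Matrix m m ℝ) (C : Matrix m k ℝ) (T : ℝ) {a b : ℝ}

noncomputable def controllabilityGramian (a b : ℝ) : Matrix m m ℝ :=
  ∫ t in a..b, exp ((T - t) • A) * C * Cᵀ * exp ((T - t) • Aᵀ)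

theorem controllabilityGramian_eq_intervalIntegral_mul_transpose (a b : ℝ) :
    controllabilityGramian A C T a b =
      ∫ t in a..b, exp ((T - t) • A) * C * (exp ((T - t) • A) * C)ᵀ := by
  simp only [controllabilityGramian, transpose_mul, ← exp_transpose, transpose_smul,
    Matrix.mul_assoc]

theorem controllabilityGramian_transpose (a b : ℝ) :
    (controllabilityGramian A C T a b)ᵀ = controllabilityGramian A C T a b := by
  rw [controllabilityGramian_eq_intervalIntegral_mul_transpose,
    transpose_intervalIntegral (by fun_prop)]
  simp only [transpose_mul, transpose_transpose, Matrix.mul_assoc]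

variable {A C T}

theorem dotProduct_controllabilityGramian_mulVec (x : m → ℝ) :
    x ⬝ᵥ (controllabilityGramian A C T a b *ᵥ x) =
      ∫ t in a..b, (x ᵥ* (exp ((T - t) • A) * C)) ⬝ᵥ (x ᵥ* (exp ((T - t) • A) * C)) := by
  rw [controllabilityGramian_eq_intervalIntegral_mul_transpose,
    dotProduct_intervalIntegral_mulVec (by fun_prop)]
  simp only [dotProduct_mul_transpose_mulVec]

theorem dotProduct_controllabilityGramian_mulVec_nonneg (hab : a ≤ b) (x : m → ℝ) :
    0 ≤ x ⬝ᵥ (controllabilityGramian A C T a b *ᵥ x) := by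
  rw [dotProduct_controllabilityGramian_mulVec]
  exact intervalIntegral.integral_nonneg hab fun t _ => by
    simpa using dotProduct_star_self_nonneg (x ᵥ* (exp ((T - t) • A) * C))

theorem dotProduct_controllabilityGramian_mulVec_eq_zero_iff (hab : a < b) (x : m → ℝ) :
    x ⬝ᵥ (controllabilityGramian A C T a b *ᵥ x) = 0 ↔ AnnihilatesKrylov A C x := by
  rw [dotProduct_controllabilityGramian_mulVec,
    intervalIntegral_dotProduct_self_eq_zero_iff (by fun_prop) hab]
  refine ⟨fun h => annihilatesKrylov_of_forall_mem_open isOpen_Ioo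
    (Set.nonempty_Ioo.2 (by linarith : T - b < T - a)) fun s hs => ?_,
    fun h t _ => h.vecMul_exp_smul_mul _⟩
  simpa using h (T - s) ⟨by linarith [hs.2], by linarith [hs.1]⟩

end Gramian

theorem forall_dotProduct_eq_zero_iff_annihilatesKrylov [CommRing R] [Nontrivial R] {n p : ℕ}
    (A : Matrix (Fin n) (Fin n) R) (C D : Matrix (Fin n) (Fin p) R) (x : Fin n → R) :
    (∀ v ∈ {v : Fin n → R | ∃ i : Fin n, ∃ j : Fin p,
        v = (A ^ (i : ℕ) * C)ᵀ j ∨ v = (A ^ (i : ℕ) * D)ᵀ j}, x ⬝ᵥ v = 0) ↔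
      AnnihilatesKrylov A C x ∧ AnnihilatesKrylov A D x := by
  simp only [annihilatesKrylov_iff_forall_pow_lt, Fintype.card_fin]
  constructor
  · intro h
    exact ⟨fun i hi => funext fun j => h _ ⟨⟨i, hi⟩, j, Or.inl rfl⟩,
      fun i hi => funext fun j => h _ ⟨⟨i, hi⟩, j, Or.inr rfl⟩⟩
  · rintro ⟨hC, hD⟩ v ⟨i, j, rfl | rfl⟩
    exacts [congrFun (hC i i.2) j, congrFun (hD i i.2) j]

end Matrix

theorem delay_gramian_posDef_iff_kalman_general
    {n p : ℕ}
    (A : Matrix (Fin n) (Fin n) ℝ) (B₁ B₂ : Matrix (Fin n) (Fin p) ℝ)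
    (h T : ℝ) (hh : 0 < h) (hhT : h < T)
    (B : Matrix (Fin n) (Fin p) ℝ) (hB : B = B₁ + NormedSpace.exp ((-h) • A) * B₂)
    (G : Matrix (Fin n) (Fin n) ℝ)
    (hG : G = (∫ t in (0:ℝ)..(T - h),
          NormedSpace.exp ((T - t) • A) * B * Bᵀ * NormedSpace.exp ((T - t) • Aᵀ))
        + ∫ t in (T - h)..T,
          NormedSpace.exp ((T - t) • A) * B₁ * B₁ᵀ * NormedSpace.exp ((T - t) • Aᵀ)) :
    G.PosDef ↔
      Submodule.span ℝ {v : Fin n → ℝ | ∃ i : Fin n, ∃ j : Fin p,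
        v = (A ^ (i : ℕ) * B₁)ᵀ j ∨ v = (A ^ (i : ℕ) * B₂)ᵀ j} = ⊤ := by
  replace hG : G = controllabilityGramian A B T 0 (T - h) +
      controllabilityGramian A B₁ T (T - h) T := hG
  have hherm : G.IsHermitian := by
    rw [IsHermitian, conjTranspose_eq_transpose_of_trivial, hG, transpose_add,
      controllabilityGramian_transpose, controllabilityGramian_transpose]
  have hpos : ∀ x, 0 < x ⬝ᵥ (G *ᵥ x) ↔
      ¬(AnnihilatesKrylov A B₁ x ∧ AnnihilatesKrylov A B₂ x) := fun x => by
    have h₁ := dotProduct_controllabilityGramian_mulVec_nonneg (A := A) (C := B) (T := T)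
      (by linarith : (0:ℝ) ≤ T - h) x
    have h₂ := dotProduct_controllabilityGramian_mulVec_nonneg (A := A) (C := B₁) (T := T)
      (by linarith : T - h ≤ T) x
    rw [hG, add_mulVec, dotProduct_add, (add_nonneg h₁ h₂).lt_iff_ne', Ne,
      add_eq_zero_iff_of_nonneg h₁ h₂,
      dotProduct_controllabilityGramian_mulVec_eq_zero_iff (by linarith),
      dotProduct_controllabilityGramian_mulVec_eq_zero_iff (by linarith), and_comm]
    refine not_congr (and_congr_right fun hB₁ => ?_)
    rw [hB, hB₁.add_right_iff, annihilatesKrylov_exp_smul_mul_iff]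
  rw [posDef_iff_dotProduct_mulVec, span_eq_top_iff_forall_dotProduct_eq_zero]
  simp only [star_trivial, hpos, forall_dotProduct_eq_zero_iff_annihilatesKrylov]
  exact ⟨fun hG x hx => by_contra fun hx0 => hG.2 hx0 hx,
    fun hK => ⟨hherm, fun x hx0 hx => hx0 (hK x hx)⟩⟩

/-- The controllability Gramian `G_T` of the delay system
`dx/dt = A x + B₁ u(t) + B₂ u(t-h)` is positive definite if and only if the columns of
the matrices `A^i B₁` and `A^i B₂`, `0 ≤ i ≤ n-1`, span `ℝⁿ` (Kalman rank condition). -/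
theorem delay_gramian_posDef_iff_kalman
    {n p : ℕ} (hn : 0 < n) (hp : 0 < p)
    (A : Matrix (Fin n) (Fin n) ℝ) (B₁ B₂ : Matrix (Fin n) (Fin p) ℝ)
    (h T : ℝ) (hh : 0 < h) (hhT : h < T)
    (B : Matrix (Fin n) (Fin p) ℝ) (hB : B = B₁ + NormedSpace.exp ((-h) • A) * B₂)
    (G : Matrix (Fin n) (Fin n) ℝ)
    (hG : G = (∫ t in (0:ℝ)..(T - h),
          NormedSpace.exp ((T - t) • A) * B * Bᵀ * NormedSpace.exp ((T - t) • Aᵀ))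
        + ∫ t in (T - h)..T,
          NormedSpace.exp ((T - t) • A) * B₁ * B₁ᵀ * NormedSpace.exp ((T - t) • Aᵀ)) :
    G.PosDef ↔
      Submodule.span ℝ {v : Fin n → ℝ | ∃ i : Fin n, ∃ j : Fin p,
        v = (A ^ (i : ℕ) * B₁)ᵀ j ∨ v = (A ^ (i : ℕ) * B₂)ᵀ j} = ⊤ :=
  delay_gramian_posDef_iff_kalman_general A B₁ B₂ h T hh hhT B hB G hG
end

section
/- Let n, p be positive integers, A a real n×n matrix, B₁, B₂ real n×p matrices, and 0 < h < T reals. Set B = B₁ + exp(−h·A)·B₂, G_T = ∫_0^{T−h} exp((T−t)A)·B·Bᵀ·exp((T−t)Aᵀ) dt + ∫_{T−h}^{T} exp((T−t)A)·B₁·B₁ᵀ·exp((T−t)Aᵀ) dt, and define the control operator L u = ∫_0^{T−h} exp((T−t)A)·B·u(t) dt + ∫_{T−h}^{T} exp((T−t)A)·B₁·u(t) dt for u : ℝ → ℝᵖ. Then the following are equivalent: (i) for every y ∈ ℝⁿ there exists a measurable u : ℝ → ℝᵖ with ∫_0^T ‖u(t)‖² dt < ∞ and L u = y; (ii) G_T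 is positive definite. -/
open Matrix MeasureTheory intervalIntegral
attribute [local instance] Matrix.linftyOpNormedAddCommGroup Matrix.linftyOpNormedSpace
open scoped Interval

/-!
Let `K(t) = exp((T - t)A) B` on `[0, T - h]` and `K(t) = exp((T - t)A) B₁` on `(T - h, T]`.
Then `L u = ∫ K u` and `G = ∫ K Kᵀ`, so `xᵀ G x = ∫ |K(t)ᵀ x|² dt`. If `G` is positive
definite, the control `u(t) = K(t)ᵀ z` with `G z = y` steers to `y`. Conversely, if
`xᵀ G x = 0` then `K(t)ᵀ x = 0` for almost every `t`, so `x` is orthogonal to the range of `L`,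
and surjectivity of `L` forces `x = 0`.
-/

section IntervalIntegral

variable {m ι : Type*} [Fintype m] [Fintype ι] {a b : ℝ}

-- Integrability of a matrix-valued function is derived from continuity inside the proofs: the
-- product topology on matrices is the topology of the `linfty` operator norm only up to unfolding.
theorem Matrix.intervalIntegral_mulVec {M : ℝ → Matrix m ι ℝ} (hM : Continuous M) (z : ι → ℝ) :
    (∫ t in a..b, M t) *ᵥ z = ∫ t in a..b, M t *ᵥ z := by
  classical
  exact ((LinearMap.toContinuousLinearMap
    (LinearMap.applyₗ z ∘ₗ (toLin' : Matrix m ι ℝ ≃ₗ[ℝ] _).toLinearMap)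
      ).intervalIntegral_comp_comm (hM.intervalIntegrable a b)).symm

theorem Matrix.intervalIntegral_transpose {M : ℝ → Matrix m ι ℝ} (hM : Continuous M) :
    (∫ t in a..b, M t)ᵀ = ∫ t in a..b, (M t)ᵀ :=
  ((LinearMap.toContinuousLinearMap (transposeLinearEquiv m ι ℝ ℝ).toLinearMap
    ).intervalIntegral_comp_comm (hM.intervalIntegrable a b)).symm

theorem Matrix.dotProduct_intervalIntegral (x : m → ℝ) {f : ℝ → m → ℝ}
    (hf : IntervalIntegrable f volume a b) :
    x ⬝ᵥ (∫ t in a..b, f t) = ∫ t in a..b, x ⬝ᵥ f t :=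
  ((LinearMap.toContinuousLinearMap (dotProductBilin ℝ ℝ x)).intervalIntegral_comp_comm hf).symm

end IntervalIntegral

theorem Matrix.dotProduct_self_nonneg {n R : Type*} [Fintype n] [Ring R] [LinearOrder R]
    [IsStrictOrderedRing R] (v : n → R) : 0 ≤ v ⬝ᵥ v :=
  Finset.sum_nonneg fun i _ => mul_self_nonneg (v i)

theorem Matrix.continuous_exp_smul {m : Type*} [Fintype m] [DecidableEq m] (A : Matrix m m ℝ) :
    Continuous fun t : ℝ => NormedSpace.exp (t • A) := by
  let _ := Matrix.linftyOpNormedRing (n := m) (α := ℝ)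
  let _ := Matrix.linftyOpNormedAlgebra (n := m) (R := ℝ) (α := ℝ)
  exact continuous_iff_continuousAt.2 fun t => (hasDerivAt_exp_smul_const A t).continuousAt

theorem integrableOn_Icc_ite_le {E : Type*} [NormedAddCommGroup E] {f g : ℝ → E} {a b c : ℝ}
    (hf : ContinuousOn f (Set.Icc a b)) (hg : ContinuousOn g (Set.Icc b c)) :
    IntegrableOn (fun t => if t ≤ b then f t else g t) (Set.Icc a c) := by
  have hf' : IntegrableOn (fun t => if t ≤ b then f t else g t) (Set.Icc a b) :=
    hf.integrableOn_Icc.congr_fun (fun t ht => (if_pos ht.2).symm) measurableSet_Icc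
  have hg' : IntegrableOn (fun t => if t ≤ b then f t else g t) (Set.Ioc b c) :=
    (hg.integrableOn_Icc.mono_set Set.Ioc_subset_Icc_self).congr_fun
      (fun t ht => (if_neg (not_le.2 ht.1)).symm) measurableSet_Ioc
  refine (hf'.union hg').mono_set fun t ht => ?_
  rcases le_or_gt t b with htb | hbt
  · exact Or.inl ⟨ht.1, htb⟩
  · exact Or.inr ⟨hbt, ht.2⟩

noncomputable def gramian {m ι : Type*} [Fintype m] [Fintype ι] (K : ℝ → Matrix m ι ℝ)
    (a b : ℝ) : Matrix m m ℝ :=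
  ∫ t in a..b, K t * (K t)ᵀ

section Gramian

variable {m ι : Type*} [Fintype m] [Fintype ι] {K : ℝ → Matrix m ι ℝ} {a b : ℝ}

theorem gramian_transpose (hK : Continuous K) : (gramian K a b)ᵀ = gramian K a b := by
  rw [gramian, intervalIntegral_transpose (hK.matrix_mul hK.matrix_transpose)]
  simp only [transpose_mul, transpose_transpose]

theorem gramian_mulVec (hK : Continuous K) (z : m → ℝ) :
    gramian K a b *ᵥ z = ∫ t in a..b, K t *ᵥ ((K t)ᵀ *ᵥ z) := by
  simp only [gramian, intervalIntegral_mulVec (hK.matrix_mul hK.matrix_transpose), mulVec_mulVec]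

theorem dotProduct_gramian_mulVec (hK : Continuous K) (x : m → ℝ) :
    x ⬝ᵥ gramian K a b *ᵥ x = ∫ t in a..b, (K t)ᵀ *ᵥ x ⬝ᵥ (K t)ᵀ *ᵥ x := by
  rw [gramian_mulVec hK, dotProduct_intervalIntegral]
  · exact integral_congr fun t _ => by rw [Matrix.dotProduct_mulVec, ← mulVec_transpose]
  · exact (hK.matrix_mulVec (hK.matrix_transpose.matrix_mulVec continuous_const)
      ).intervalIntegrable _ _

theorem dotProduct_gramian_mulVec_nonneg (hK : Continuous K) (hab : a ≤ b) (x : m → ℝ) :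
    0 ≤ x ⬝ᵥ gramian K a b *ᵥ x := by
  rw [dotProduct_gramian_mulVec hK]
  exact integral_nonneg hab fun t _ => dotProduct_self_nonneg _

theorem dotProduct_intervalIntegral_mulVec_eq_zero_of_gramian (hK : Continuous K) {x : m → ℝ}
    (hx : x ⬝ᵥ gramian K a b *ᵥ x = 0) (u : ℝ → ι → ℝ) :
    x ⬝ᵥ ∫ t in a..b, K t *ᵥ u t = 0 := by
  have hKx : Continuous fun t => (K t)ᵀ *ᵥ x := hK.matrix_transpose.matrix_mulVec continuous_const
  have hKx_ae : ∀ᵐ t, t ∈ Ι a b → (K t)ᵀ *ᵥ x = 0 := by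
    rw [dotProduct_gramian_mulVec hK, integral_eq_zero_iff_of_nonneg_ae
      (Filter.Eventually.of_forall fun t => dotProduct_self_nonneg _)
      ((hKx.dotProduct hKx).intervalIntegrable _ _), ← Set.uIoc_eq_union,
      Filter.EventuallyEq, ae_restrict_iff' measurableSet_uIoc] at hx
    filter_upwards [hx] with t ht hmem using dotProduct_self_eq_zero.1 (ht hmem)
  by_cases hint : IntervalIntegrable (fun t => K t *ᵥ u t) volume a b
  · rw [dotProduct_intervalIntegral x hint]
    refine integral_zero_ae ?_
    filter_upwards [hKx_ae] with t ht hmem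
    rw [Matrix.dotProduct_mulVec, ← mulVec_transpose, ht hmem, zero_dotProduct]
  · rw [integral_undef hint, dotProduct_zero]

end Gramian

section PiecewiseKernel

variable {m ι : Type*} [Fintype m] [Fintype ι] {K₁ K₂ : ℝ → Matrix m ι ℝ} {a b c : ℝ}

theorem posDef_gramian_add_of_forall_exists (hK₁ : Continuous K₁) (hK₂ : Continuous K₂)
    (hab : a ≤ b) (hbc : b ≤ c)
    (hsurj : ∀ y, ∃ u : ℝ → ι → ℝ,
      (∫ t in a..b, K₁ t *ᵥ u t) + ∫ t in b..c, K₂ t *ᵥ u t = y) :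
    (gramian K₁ a b + gramian K₂ b c).PosDef := by
  refine posDef_iff_dotProduct_mulVec.2 ⟨?_, fun x hx => ?_⟩
  · rw [IsHermitian, conjTranspose_eq_transpose_of_trivial, transpose_add, gramian_transpose hK₁,
      gramian_transpose hK₂]
  have h₁ := dotProduct_gramian_mulVec_nonneg hK₁ hab x
  have h₂ := dotProduct_gramian_mulVec_nonneg hK₂ hbc x
  rw [star_trivial, add_mulVec, dotProduct_add]
  refine lt_of_le_of_ne (add_nonneg h₁ h₂) fun hzero => hx (dotProduct_self_eq_zero.1 ?_)
  obtain ⟨h₁0, h₂0⟩ := (add_eq_zero_iff_of_nonneg h₁ h₂).1 hzero.symm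
  obtain ⟨u, hu⟩ := hsurj x
  calc x ⬝ᵥ x = x ⬝ᵥ ((∫ t in a..b, K₁ t *ᵥ u t) + ∫ t in b..c, K₂ t *ᵥ u t) := by rw [hu]
    _ = 0 := by
      rw [dotProduct_add, dotProduct_intervalIntegral_mulVec_eq_zero_of_gramian hK₁ h₁0,
        dotProduct_intervalIntegral_mulVec_eq_zero_of_gramian hK₂ h₂0, add_zero]

theorem exists_control_of_posDef_gramian_add (hK₁ : Continuous K₁) (hK₂ : Continuous K₂)
    (hab : a ≤ b) (hbc : b ≤ c) (hG : (gramian K₁ a b + gramian K₂ b c).PosDef) (y : m → ℝ) :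
    ∃ u : ℝ → ι → ℝ, Measurable u ∧ IntegrableOn (fun t => ‖u t‖ ^ 2) (Set.Icc a c) ∧
      (∫ t in a..b, K₁ t *ᵥ u t) + ∫ t in b..c, K₂ t *ᵥ u t = y := by
  classical
  obtain ⟨z, rfl⟩ := mulVec_surjective_iff_isUnit.2 hG.isUnit y
  have hv₁ : Continuous fun t => (K₁ t)ᵀ *ᵥ z :=
    hK₁.matrix_transpose.matrix_mulVec continuous_const
  have hv₂ : Continuous fun t => (K₂ t)ᵀ *ᵥ z :=
    hK₂.matrix_transpose.matrix_mulVec continuous_const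
  refine ⟨fun t => if t ≤ b then (K₁ t)ᵀ *ᵥ z else (K₂ t)ᵀ *ᵥ z,
    hv₁.measurable.ite measurableSet_Iic hv₂.measurable, ?_, ?_⟩
  · refine (integrableOn_Icc_ite_le (b := b) (hv₁.norm.pow 2).continuousOn
      (hv₂.norm.pow 2).continuousOn).congr_fun (fun t _ => ?_) measurableSet_Icc
    dsimp only
    split_ifs <;> rfl
  · rw [add_mulVec, gramian_mulVec hK₁, gramian_mulVec hK₂]
    congr 1
    · refine integral_congr fun t ht => ?_
      rw [Set.uIcc_of_le hab] at ht
      simp only [if_pos ht.2]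
    · refine integral_congr_ae (Filter.Eventually.of_forall fun t ht => ?_)
      rw [Set.uIoc_of_le hbc] at ht
      simp only [if_neg (not_le.2 ht.1)]

theorem forall_exists_control_iff_posDef_gramian_add (hK₁ : Continuous K₁)
    (hK₂ : Continuous K₂) (hab : a ≤ b) (hbc : b ≤ c) :
    (∀ y, ∃ u : ℝ → ι → ℝ, Measurable u ∧ IntegrableOn (fun t => ‖u t‖ ^ 2) (Set.Icc a c) ∧
      (∫ t in a..b, K₁ t *ᵥ u t) + ∫ t in b..c, K₂ t *ᵥ u t = y) ↔
      (gramian K₁ a b + gramian K₂ b c).PosDef :=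
  ⟨fun h => posDef_gramian_add_of_forall_exists hK₁ hK₂ hab hbc fun y =>
      (h y).imp fun _ hu => hu.2.2,
    exists_control_of_posDef_gramian_add hK₁ hK₂ hab hbc⟩

end PiecewiseKernel

theorem delay_controllable_iff_gramian_posDef_general
    {n p : ℕ}
    (A : Matrix (Fin n) (Fin n) ℝ) (B₁ : Matrix (Fin n) (Fin p) ℝ)
    (h T : ℝ) (hh : 0 < h) (hhT : h < T)
    (B : Matrix (Fin n) (Fin p) ℝ)
    (G : Matrix (Fin n) (Fin n) ℝ)
    (hG : G = (∫ t in (0:ℝ)..(T - h),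
          NormedSpace.exp ((T - t) • A) * B * Bᵀ * NormedSpace.exp ((T - t) • Aᵀ))
        + ∫ t in (T - h)..T,
          NormedSpace.exp ((T - t) • A) * B₁ * B₁ᵀ * NormedSpace.exp ((T - t) • Aᵀ))
    (L : (ℝ → Fin p → ℝ) → (Fin n → ℝ))
    (hL : ∀ u : ℝ → Fin p → ℝ,
      L u = (∫ t in (0:ℝ)..(T - h), (NormedSpace.exp ((T - t) • A) * B).mulVec (u t))
        + ∫ t in (T - h)..T, (NormedSpace.exp ((T - t) • A) * B₁).mulVec (u t)) :
    (∀ y : Fin n → ℝ, ∃ u : ℝ → Fin p → ℝ, Measurable u ∧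
        IntegrableOn (fun t => ‖u t‖ ^ 2) (Set.Icc (0:ℝ) T) volume ∧ L u = y)
      ↔ G.PosDef := by
  have hE : Continuous fun t : ℝ => NormedSpace.exp ((T - t) • A) :=
    (continuous_exp_smul A).comp (continuous_const.sub continuous_id)
  have hG' : G = gramian (fun t => NormedSpace.exp ((T - t) • A) * B) 0 (T - h) +
      gramian (fun t => NormedSpace.exp ((T - t) • A) * B₁) (T - h) T := by
    simp only [hG, gramian, transpose_mul, ← exp_transpose, transpose_smul, Matrix.mul_assoc]
  simp only [hL, hG']
  exact forall_exists_control_iff_posDef_gramian_add (hE.matrix_mul continuous_const)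
    (hE.matrix_mul continuous_const) (by linarith) (by linarith)

/-- Exact controllability of the deterministic delay system on `[0, T]` (surjectivity of
the control operator `L` over measurable square-integrable controls) is equivalent to
positive definiteness of the controllability Gramian `G_T`. -/
theorem delay_controllable_iff_gramian_posDef
    {n p : ℕ} (hn : 0 < n) (hp : 0 < p)
    (A : Matrix (Fin n) (Fin n) ℝ) (B₁ B₂ : Matrix (Fin n) (Fin p) ℝ)
    (h T : ℝ) (hh : 0 < h) (hhT : h < T)
    (B : Matrix (Fin n) (Fin p) ℝ) (hB : B = B₁ + NormedSpace.exp ((-h) • A) * B₂)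
    (G : Matrix (Fin n) (Fin n) ℝ)
    (hG : G = (∫ t in (0:ℝ)..(T - h),
          NormedSpace.exp ((T - t) • A) * B * Bᵀ * NormedSpace.exp ((T - t) • Aᵀ))
        + ∫ t in (T - h)..T,
          NormedSpace.exp ((T - t) • A) * B₁ * B₁ᵀ * NormedSpace.exp ((T - t) • Aᵀ))
    (L : (ℝ → Fin p → ℝ) → (Fin n → ℝ))
    (hL : ∀ u : ℝ → Fin p → ℝ,
      L u = (∫ t in (0:ℝ)..(T - h), (NormedSpace.exp ((T - t) • A) * B).mulVec (u t))
        + ∫ t in (T - h)..T, (NormedSpace.exp ((T - t) • A) * B₁).mulVec (u t)) :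
    (∀ y : Fin n → ℝ, ∃ u : ℝ → Fin p → ℝ, Measurable u ∧
        IntegrableOn (fun t => ‖u t‖ ^ 2) (Set.Icc (0:ℝ) T) volume ∧ L u = y)
      ↔ G.PosDef :=
  delay_controllable_iff_gramian_posDef_general A B₁ h T hh hhT B G hG L hL
end

section
/- Let n be a positive integer, A and B real n×n matrices, and z ∈ ℝⁿ. If there exists ε > 0 such that zᵀ·exp(tA)·B = 0 for all t ∈ [0, ε], then zᵀ·A^k·B = 0 for every natural number k. -/
/-!
The function `t ↦ zᵀ exp(tA) B` is real analytic, so vanishing on `[0, ε]` forces it to vanish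
on all of `ℝ`. Differentiating the identity `zᵀ exp(tA) A^k B = 0` in `t` gives the same identity
for `k + 1`, and evaluating at `t = 0` gives `zᵀ A^k B = 0`.
-/

open Matrix NormedSpace Set Filter Topology

section

variable {𝔸 F : Type*} [NormedRing 𝔸] [NormedAlgebra ℝ 𝔸] [CompleteSpace 𝔸]
  [NormedAddCommGroup F] [NormedSpace ℝ F] (L : 𝔸 →L[ℝ] F) (a c : 𝔸)

theorem analyticOnNhd_apply_exp_smul_mul :
    AnalyticOnNhd ℝ (fun t : ℝ => L (exp (t • a) * c)) univ := fun t _ => by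
  have hexp : AnalyticAt ℝ (fun s : ℝ => exp (s • a)) t :=
    (exp_analytic (t • a)).comp (f := fun s : ℝ => s • a) (analyticAt_id.smul analyticAt_const)
  exact (L.analyticAt _).comp (hexp.mul analyticAt_const)

theorem apply_exp_smul_mul_eq_zero_of_eventually {t₀ : ℝ}
    (h : ∀ᶠ t in 𝓝 t₀, L (exp (t • a) * c) = 0) :
    (fun t : ℝ => L (exp (t • a) * c)) = 0 :=
  (analyticOnNhd_apply_exp_smul_mul L a c).eq_of_eventuallyEq analyticOnNhd_const h

theorem apply_exp_smul_mul_mul_eq_zero (h : (fun t : ℝ => L (exp (t • a) * c)) = 0) :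
    (fun t : ℝ => L (exp (t • a) * (a * c))) = 0 := by
  funext t
  have hderiv : HasDerivAt (fun t : ℝ => L (exp (t • a) * c)) (L (exp (t • a) * a * c)) t :=
    L.hasFDerivAt.comp_hasDerivAt t ((hasDerivAt_exp_smul_const a t).mul_const c)
  rw [h] at hderiv
  simpa [mul_assoc] using hderiv.unique (hasDerivAt_const t (0 : F))

theorem apply_pow_mul_eq_zero_of_apply_exp_smul_mul_eq_zero
    (h : (fun t : ℝ => L (exp (t • a) * c)) = 0) (k : ℕ) : L (a ^ k * c) = 0 := by
  have hk : (fun t : ℝ => L (exp (t • a) * (a ^ k * c))) = 0 := by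
    induction k with
    | zero => simpa using h
    | succ k ih => simpa [pow_succ', mul_assoc] using apply_exp_smul_mul_mul_eq_zero L a _ ih
  simpa using congrFun hk 0

end

attribute [local instance] Matrix.linftyOpNormedRing Matrix.linftyOpNormedAlgebra

theorem vecMul_exp_eq_zero_on_interval_imp_kalman_general
    {n : ℕ} (A B : Matrix (Fin n) (Fin n) ℝ) (z : Fin n → ℝ)
    (hz : ∃ ε : ℝ, 0 < ε ∧ ∀ t ∈ Set.Icc (0:ℝ) ε,
      Matrix.vecMul z (NormedSpace.exp (t • A) * B) = 0) :
    ∀ k : ℕ, Matrix.vecMul z (A ^ k * B) = 0 := by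
  obtain ⟨ε, hε, hvanish⟩ := hz
  let L := LinearMap.toContinuousLinearMap (vecMulBilin ℝ ℝ z : Matrix (Fin n) (Fin n) ℝ →ₗ[ℝ] _)
  have hnhds : Icc 0 ε ∈ 𝓝 (ε / 2) := Icc_mem_nhds (by linarith) (by linarith)
  exact apply_pow_mul_eq_zero_of_apply_exp_smul_mul_eq_zero L A B
    (apply_exp_smul_mul_eq_zero_of_eventually L A B (eventually_of_mem hnhds hvanish))

/-- Analyticity step of the Kalman rank criterion: if `zᵀ e^{tA} B = 0` for all `t` in
some interval `[0, ε]` with `ε > 0`, then all Kalman products vanish: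
`zᵀ A^k B = 0` for every `k`. -/
theorem vecMul_exp_eq_zero_on_interval_imp_kalman
    {n : ℕ} (hn : 0 < n) (A B : Matrix (Fin n) (Fin n) ℝ) (z : Fin n → ℝ)
    (hz : ∃ ε : ℝ, 0 < ε ∧ ∀ t ∈ Set.Icc (0:ℝ) ε,
      Matrix.vecMul z (NormedSpace.exp (t • A) * B) = 0) :
    ∀ k : ℕ, Matrix.vecMul z (A ^ k * B) = 0 :=
  vecMul_exp_eq_zero_on_interval_imp_kalman_general A B z hz
end

section
/- Let n be a positive integer, A a real n×n matrix, B a real n×p matrix, and z ∈ ℝⁿ. If zᵀ·A^i·B = 0 for every i with 0 ≤ i ≤ n−1, then zᵀ·A^k·B = 0 for every natural number k. -/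
open Matrix Polynomial

/-- Cayley–Hamilton reduction in the Kalman rank criterion: if `zᵀ A^i B = 0` for all
`0 ≤ i ≤ n-1`, then `zᵀ A^k B = 0` for every natural number `k`. -/
theorem kalman_products_vanish_of_first_n
    {n p : ℕ} (hn : 0 < n) (A : Matrix (Fin n) (Fin n) ℝ)
    (B : Matrix (Fin n) (Fin p) ℝ) (z : Fin n → ℝ)
    (hz : ∀ i : ℕ, i < n → Matrix.vecMul z (A ^ i * B) = 0) :
    ∀ k : ℕ, Matrix.vecMul z (A ^ k * B) = 0 := by
  intro k
  rw [Matrix.pow_eq_aeval_mod_charpoly A k]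
  set q := (X ^ k : ℝ[X]) %ₘ A.charpoly with hq
  have hdegq : q.degree < (n : ℕ) := by
    have h1 : q.degree < A.charpoly.degree :=
      Polynomial.degree_modByMonic_lt _ A.charpoly_monic
    rwa [A.charpoly_degree_eq_dim, Fintype.card_fin] at h1
  have hdeg : q.natDegree < n := by
    by_cases hq0 : q = 0
    · simpa [hq0] using hn
    · exact Polynomial.natDegree_lt_iff_degree_lt hq0 |>.mpr (by simpa using hdegq)
  have hsum : Polynomial.aeval A q = ∑ i ∈ Finset.range n, q.coeff i • A ^ i :=
    Polynomial.aeval_eq_sum_range' hdeg A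
  rw [hsum, Matrix.sum_mul]
  rw [show Matrix.vecMul z (∑ i ∈ Finset.range n, q.coeff i • A ^ i * B)
      = ∑ i ∈ Finset.range n, q.coeff i • Matrix.vecMul z (A ^ i * B) by
    funext x
    simp only [Matrix.vecMul, dotProduct, Finset.sum_apply, Matrix.sum_apply,
      Matrix.smul_apply, Finset.mul_sum, Pi.smul_apply, smul_eq_mul, Finset.mul_sum]
    rw [Finset.sum_comm]
    exact Finset.sum_congr rfl fun i _ => Finset.sum_congr rfl fun j _ => by
      simp [Matrix.smul_mul, Matrix.smul_apply]; ring]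
  refine Finset.sum_eq_zero fun i hi => ?_
  rw [hz i (Finset.mem_range.mp hi), smul_zero]
end

section
/- Let n be a positive integer, S a symmetric positive definite real n×n matrix, a ∈ ℝⁿ, and σ₀ ≥ 0 a real number. Then the function σ ↦ ln det(S + σ·a·aᵀ) is differentiable at σ₀ with derivative equal to (aᵀ S⁻¹ a)/(1 + σ₀ · aᵀ S⁻¹ a). -/
/-! By the matrix determinant lemma, `det (S + σ • vecMulVec a a) = det S * (1 + σ * aᵀ S⁻¹ a)`,
so the function is the logarithm of an affine function of `σ`; that function is positive at
`σ₀ ≥ 0` because `aᵀ S⁻¹ a ≥ 0` for positive definite `S`. -/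

open Matrix

theorem Matrix.det_add_vecMulVec {m α : Type*} [Fintype m] [DecidableEq m] [CommRing α]
    {A : Matrix m m α} (hA : IsUnit A.det) (u v : m → α) :
    (A + vecMulVec u v).det = A.det * (1 + v ⬝ᵥ A⁻¹ *ᵥ u) := by
  rw [vecMulVec_eq Unit, det_add_replicateCol_mul_replicateRow hA, Matrix.mul_assoc,
    ← replicateCol_mulVec, replicateRow_mul_replicateCol, det_unique (1 + of _)]
  rfl

theorem Matrix.det_add_smul_vecMulVec {m α : Type*} [Fintype m] [DecidableEq m] [CommRing α]
    {A : Matrix m m α} (hA : IsUnit A.det) (u v : m → α) (t : α) :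
    (A + t • vecMulVec u v).det = A.det * (1 + t * (v ⬝ᵥ A⁻¹ *ᵥ u)) := by
  rw [← smul_vecMulVec, det_add_vecMulVec hA, mulVec_smul, dotProduct_smul, smul_eq_mul]

theorem hasDerivAt_log_det_add_smul_vecMulVec {m : Type*} [Fintype m] [DecidableEq m]
    {A : Matrix m m ℝ} (hA : A.det ≠ 0) (u v : m → ℝ) {t₀ : ℝ}
    (ht₀ : 1 + t₀ * (v ⬝ᵥ A⁻¹ *ᵥ u) ≠ 0) :
    HasDerivAt (fun t : ℝ => Real.log (A + t • vecMulVec u v).det)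
      ((v ⬝ᵥ A⁻¹ *ᵥ u) / (1 + t₀ * (v ⬝ᵥ A⁻¹ *ᵥ u))) t₀ := by
  set c := v ⬝ᵥ A⁻¹ *ᵥ u
  simp_rw [det_add_smul_vecMulVec hA.isUnit]
  have hlin : HasDerivAt (fun t : ℝ => A.det * (1 + t * c)) (A.det * c) t₀ := by
    simpa using (((hasDerivAt_id t₀).mul_const c).const_add 1).const_mul A.det
  convert hlin.log (mul_ne_zero hA ht₀) using 1
  field_simp

theorem log_det_rank_one_update_hasDerivAt_general
    {n : ℕ} (S : Matrix (Fin n) (Fin n) ℝ) (hS : S.PosDef)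
    (a : Fin n → ℝ) (σ₀ : ℝ) (hσ₀ : 0 ≤ σ₀) :
    HasDerivAt (fun σ : ℝ => Real.log ((S + σ • Matrix.vecMulVec a a).det))
      ((a ⬝ᵥ S⁻¹.mulVec a) / (1 + σ₀ * (a ⬝ᵥ S⁻¹.mulVec a))) σ₀ := by
  have hc : 0 ≤ a ⬝ᵥ S⁻¹ *ᵥ a := by
    simpa using hS.inv.posSemidef.dotProduct_mulVec_nonneg a
  exact hasDerivAt_log_det_add_smul_vecMulVec hS.det_pos.ne' a a (by positivity)

/-- Stationarity computation for the water-filling optimality conditions: for `S`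
symmetric positive definite, `a ∈ ℝⁿ` and `σ₀ ≥ 0`, the function
`σ ↦ ln det(S + σ a aᵀ)` has derivative `(aᵀ S⁻¹ a) / (1 + σ₀ aᵀ S⁻¹ a)` at `σ₀`. -/
theorem log_det_rank_one_update_hasDerivAt
    {n : ℕ} (hn : 0 < n) (S : Matrix (Fin n) (Fin n) ℝ) (hS : S.PosDef)
    (a : Fin n → ℝ) (σ₀ : ℝ) (hσ₀ : 0 ≤ σ₀) :
    HasDerivAt (fun σ : ℝ => Real.log ((S + σ • Matrix.vecMulVec a a).det))
      ((a ⬝ᵥ S⁻¹.mulVec a) / (1 + σ₀ * (a ⬝ᵥ S⁻¹.mulVec a))) σ₀ :=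
  log_det_rank_one_update_hasDerivAt_general S hS a σ₀ hσ₀
end
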